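/- arXiv:2105.02695 — 2 statements merged into one kernel-verified Lean document; each statement's English description precedes it below -/
import Mathlib

section
/- Core inequality of Proposition 2.1 (microscopic best estimate only): assume exp(−β(𝓔̄ − 𝓔̲)) ≤ √2 − 1 and let λ, σ, κ ≥ 0. Then (λ²/2) ∫∫ (γ_β(v,v_*))² ‖v_* − v‖² dμ dμ + λ ∫∫ γ_β(v,v_*) ⟨v − m, v_* − v⟩ dμ dμ + (σ² κ/2) ∫∫ (γ_β(v,v_*))² ‖v − v_*‖² dμ dμ ≤ −( λ/C_{β,𝓔} − λ² − 2σ²κ ) V, where C_{β,𝓔} := exp(β(𝓔̄ − 𝓔̲)). Consequently, if σ² < (λ/(2κ))(1/C_{β,𝓔} − λ), the right-hand side is strictly negative whenever V > 0. -/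
/-!
Symmetrise in `(v, v_*)` and use `γ(v, v_*) + γ(v_*, v) = 1`. Since `γ² + (1 - γ)² ≤ 1`, both
quadratic terms are at most `½ ∫∫ ‖v_* - v‖² = 2V`. In the cross term write
`⟨v - m, v_* - v⟩ = ⟨v - m, v_* - m⟩ - ‖v - m‖²`: after symmetrisation the first part carries
the weight `1`, so it integrates to `‖∫ (v - m) dμ‖² = 0`, and `γ ≥ 1 / (1 + C)` bounds the second
from below by `2V / (1 + C) ≥ V / C`.
-/

open MeasureTheory Real

/-- The weight `γ_β`. -/
noncomputable def pairWeight {α : Type*} (β : ℝ) (𝓔 : α → ℝ) (v w : α) : ℝ :=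
  exp (-β * 𝓔 w) / (exp (-β * 𝓔 v) + exp (-β * 𝓔 w))

section pairWeight

variable {α : Type*} {β : ℝ} {𝓔 : α → ℝ}

lemma pairWeight_eq_one_div_one_add_exp (v w : α) :
    pairWeight β 𝓔 v w = 1 / (1 + exp (β * (𝓔 w - 𝓔 v))) := by
  have h : exp (-β * 𝓔 v) = exp (β * (𝓔 w - 𝓔 v)) * exp (-β * 𝓔 w) := by
    rw [← exp_add]; ring_nf
  rw [pairWeight, h, ← add_one_mul, div_mul_cancel_right₀ (exp_pos _).ne', add_comm, one_div]

lemma pairWeight_nonneg (v w : α) : 0 ≤ pairWeight β 𝓔 v w := by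
  rw [pairWeight_eq_one_div_one_add_exp]; positivity

lemma pairWeight_add_swap (v w : α) : pairWeight β 𝓔 v w + pairWeight β 𝓔 w v = 1 := by
  unfold pairWeight
  rw [add_comm (exp (-β * 𝓔 w)) (exp (-β * 𝓔 v)), ← add_div, add_comm,
    div_self (by positivity)]

lemma one_div_one_add_exp_le_pairWeight (hβ : 0 ≤ β) {D : ℝ} {v w : α}
    (h : 𝓔 w - 𝓔 v ≤ D) : 1 / (1 + exp (β * D)) ≤ pairWeight β 𝓔 v w := by
  rw [pairWeight_eq_one_div_one_add_exp]
  gcongr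

lemma measurable_pairWeight [MeasurableSpace α] (h𝓔 : Measurable 𝓔) :
    Measurable (Function.uncurry (pairWeight β 𝓔)) := by
  unfold pairWeight Function.uncurry
  fun_prop

end pairWeight

lemma MeasureTheory.MemLp.integrable_inner {α E : Type*} [MeasurableSpace α] {μ : Measure α}
    [NormedAddCommGroup E] [InnerProductSpace ℝ E] {f g : α → E}
    (hf : MemLp f 2 μ) (hg : MemLp g 2 μ) : Integrable (fun x => inner ℝ (f x) (g x)) μ :=
  (L2.integrable_inner (𝕜 := ℝ) (hf.toLp f) (hg.toLp g)).congr <| by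
    filter_upwards [hf.coeFn_toLp, hg.coeFn_toLp] with x hfx hgx
    rw [hfx, hgx]

lemma MeasureTheory.integral_add_swap_eq_two_mul {α : Type*} [MeasurableSpace α] {ν : Measure α}
    [SFinite ν] {F : α × α → ℝ} (hF : Integrable F (ν.prod ν)) :
    ∫ p, (F p + F p.swap) ∂(ν.prod ν) = 2 * ∫ p, F p ∂(ν.prod ν) := by
  rw [integral_add hF (hF.swap : Integrable (fun p => F p.swap) _), integral_prod_swap F, two_mul]

section SecondMoment

variable {E : Type*} [NormedAddCommGroup E] [MeasurableSpace E] {μ : Measure E}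
  [IsProbabilityMeasure μ]

lemma integrable_norm_sub_sq (hμ : MemLp id 2 μ) (c : E) :
    Integrable (fun w => ‖w - c‖ ^ 2) μ :=
  (hμ.sub (memLp_const c)).integrable_norm_pow two_ne_zero

lemma memLp_prod_fst_sub (hμ : MemLp id 2 μ) (c : E) :
    MemLp (fun p : E × E => p.1 - c) 2 (μ.prod μ) :=
  (hμ.sub (memLp_const c)).comp_measurePreserving measurePreserving_fst

lemma memLp_prod_snd_sub (hμ : MemLp id 2 μ) (c : E) :
    MemLp (fun p : E × E => p.2 - c) 2 (μ.prod μ) :=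
  (hμ.sub (memLp_const c)).comp_measurePreserving measurePreserving_snd

lemma integrable_prod_norm_sub_sq (hμ : MemLp id 2 μ) :
    Integrable (fun p : E × E => ‖p.2 - p.1‖ ^ 2) (μ.prod μ) := by
  have h : MemLp (fun p : E × E => (p.2 - 0) - (p.1 - 0)) 2 (μ.prod μ) :=
    (memLp_prod_snd_sub hμ 0).sub (memLp_prod_fst_sub hμ 0)
  simpa only [sub_zero] using h.integrable_norm_pow two_ne_zero

variable [InnerProductSpace ℝ E] [CompleteSpace E]

lemma integral_sub_integral_self (hμ : MemLp id 2 μ) : ∫ w, (w - ∫ u, u ∂μ) ∂μ = 0 := by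
  have hint : Integrable (fun w : E => w) μ := hμ.integrable one_le_two
  rw [integral_sub hint (integrable_const _), integral_const, probReal_univ, one_smul, sub_self]

lemma integral_norm_sub_sq_eq (hμ : MemLp id 2 μ) (v : E) :
    ∫ w, ‖w - v‖ ^ 2 ∂μ = ∫ w, ‖w - ∫ u, u ∂μ‖ ^ 2 ∂μ + ‖v - ∫ u, u ∂μ‖ ^ 2 := by
  set m := ∫ u, u ∂μ
  have hc : Integrable (fun w => w - m) μ := (hμ.sub (memLp_const m)).integrable one_le_two
  have hsq := integrable_norm_sub_sq hμ m
  have hcross : Integrable (fun w => 2 * inner ℝ (v - m) (w - m)) μ :=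
    (hc.const_inner (v - m)).const_mul 2
  have hdiff : Integrable (fun w => ‖w - m‖ ^ 2 - 2 * inner ℝ (v - m) (w - m)) μ := hsq.sub hcross
  have hexpand : ∀ w, ‖w - v‖ ^ 2 = ‖w - m‖ ^ 2 - 2 * inner ℝ (v - m) (w - m) + ‖v - m‖ ^ 2 := by
    intro w
    rw [show w - v = (w - m) - (v - m) by abel, norm_sub_sq_real, real_inner_comm]
  simp_rw [hexpand]
  rw [integral_add hdiff (integrable_const _), integral_sub hsq hcross,
    integral_const_mul, integral_inner hc, integral_sub_integral_self hμ, inner_zero_right,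
    integral_const, probReal_univ, one_smul]
  ring

lemma integral_prod_norm_sub_sq (hμ : MemLp id 2 μ) :
    ∫ p, ‖p.2 - p.1‖ ^ 2 ∂(μ.prod μ) = 2 * ∫ w, ‖w - ∫ u, u ∂μ‖ ^ 2 ∂μ := by
  rw [integral_prod _ (integrable_prod_norm_sub_sq hμ),
    integral_congr_ae (Filter.Eventually.of_forall (integral_norm_sub_sq_eq hμ)),
    integral_add (integrable_const _) (integrable_norm_sub_sq hμ _), integral_const,
    probReal_univ, one_smul]
  ring

lemma integral_prod_inner_sub_integral (hμ : MemLp id 2 μ) :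
    ∫ p, inner ℝ (p.1 - ∫ u, u ∂μ) (p.2 - ∫ u, u ∂μ) ∂(μ.prod μ) = 0 := by
  have hc : Integrable (fun w => w - ∫ u, u ∂μ) μ :=
    (hμ.sub (memLp_const _)).integrable one_le_two
  rw [integral_prod _ ((memLp_prod_fst_sub hμ _).integrable_inner (memLp_prod_snd_sub hμ _))]
  simp_rw [integral_inner hc, integral_sub_integral_self hμ, inner_zero_right, integral_zero]

end SecondMoment

lemma integrable_weight_mul {α : Type*} [MeasurableSpace α] {ν : Measure (α × α)}
    {g : α → α → ℝ} {F : α × α → ℝ} (hF : Integrable F ν)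
    (hg : AEStronglyMeasurable (Function.uncurry g) ν) (hg_nonneg : ∀ v w, 0 ≤ g v w)
    (hg_add_swap : ∀ v w, g v w + g w v = 1) :
    Integrable (fun p => g p.1 p.2 * F p) ν :=
  hF.bdd_mul (c := 1) hg <| ae_of_all _ fun p => by
    rw [Real.norm_eq_abs, abs_of_nonneg (hg_nonneg p.1 p.2)]
    linarith [hg_add_swap p.1 p.2, hg_nonneg p.2 p.1]

section SymmetricWeight

variable {E : Type*} [NormedAddCommGroup E] [InnerProductSpace ℝ E] [CompleteSpace E]
  [MeasurableSpace E] {μ : Measure E} [IsProbabilityMeasure μ] {g : E → E → ℝ}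

lemma integral_weight_sq_mul_norm_sub_sq_le (hμ : MemLp id 2 μ)
    (hg : AEStronglyMeasurable (Function.uncurry g) (μ.prod μ)) (hg_nonneg : ∀ v w, 0 ≤ g v w)
    (hg_add_swap : ∀ v w, g v w + g w v = 1) :
    ∫ v, ∫ w, g v w ^ 2 * ‖w - v‖ ^ 2 ∂μ ∂μ ≤ ∫ w, ‖w - ∫ u, u ∂μ‖ ^ 2 ∂μ := by
  set F : E × E → ℝ := fun p => g p.1 p.2 ^ 2 * ‖p.2 - p.1‖ ^ 2
  have hF : Integrable F (μ.prod μ) := by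
    simpa only [F, pow_two, mul_assoc] using integrable_weight_mul
      (integrable_weight_mul (integrable_prod_norm_sub_sq hμ) hg hg_nonneg hg_add_swap)
      hg hg_nonneg hg_add_swap
  have hsymm : ∫ p, (F p + F p.swap) ∂(μ.prod μ) ≤ ∫ p, ‖p.2 - p.1‖ ^ 2 ∂(μ.prod μ) := by
    refine integral_mono (hF.add hF.swap) (integrable_prod_norm_sub_sq hμ) fun p => ?_
    have hsq : g p.1 p.2 ^ 2 + g p.2 p.1 ^ 2 ≤ 1 := by
      nlinarith [hg_add_swap p.1 p.2, hg_nonneg p.1 p.2, hg_nonneg p.2 p.1]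
    simp only [F, Prod.fst_swap, Prod.snd_swap, norm_sub_rev p.1 p.2]
    nlinarith [sq_nonneg ‖p.2 - p.1‖]
  rw [integral_add_swap_eq_two_mul hF, integral_prod_norm_sub_sq hμ] at hsymm
  rw [integral_integral hF]
  linarith

lemma integral_weight_mul_inner_sub_integral_eq_zero (hμ : MemLp id 2 μ)
    (hg : AEStronglyMeasurable (Function.uncurry g) (μ.prod μ)) (hg_nonneg : ∀ v w, 0 ≤ g v w)
    (hg_add_swap : ∀ v w, g v w + g w v = 1) :
    ∫ p, g p.1 p.2 * inner ℝ (p.1 - ∫ u, u ∂μ) (p.2 - ∫ u, u ∂μ) ∂(μ.prod μ) = 0 := by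
  set m := ∫ u, u ∂μ
  set F : E × E → ℝ := fun p => g p.1 p.2 * inner ℝ (p.1 - m) (p.2 - m)
  have hF : Integrable F (μ.prod μ) := integrable_weight_mul
    ((memLp_prod_fst_sub hμ m).integrable_inner (memLp_prod_snd_sub hμ m)) hg hg_nonneg hg_add_swap
  have hsymm : ∫ p, (F p + F p.swap) ∂(μ.prod μ) = 0 := by
    rw [← integral_prod_inner_sub_integral hμ]
    refine integral_congr_ae (ae_of_all _ fun p => ?_)
    simp only [F, Prod.fst_swap, Prod.snd_swap]
    linear_combination inner ℝ (p.1 - m) (p.2 - m) * hg_add_swap p.1 p.2 +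
      g p.2 p.1 * real_inner_comm (p.1 - m) (p.2 - m)
  rw [integral_add_swap_eq_two_mul hF] at hsymm
  linarith

lemma integral_weight_mul_inner_le (hμ : MemLp id 2 μ)
    (hg : AEStronglyMeasurable (Function.uncurry g) (μ.prod μ)) (hg_nonneg : ∀ v w, 0 ≤ g v w)
    (hg_add_swap : ∀ v w, g v w + g w v = 1) {c : ℝ} (hc : ∀ v w, c ≤ g v w) :
    ∫ v, ∫ w, g v w * inner ℝ (v - ∫ u, u ∂μ) (w - v) ∂μ ∂μ ≤
      -c * ∫ w, ‖w - ∫ u, u ∂μ‖ ^ 2 ∂μ := by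
  set m := ∫ u, u ∂μ
  have hsq : Integrable (fun p : E × E => ‖p.1 - m‖ ^ 2) (μ.prod μ) :=
    (memLp_prod_fst_sub hμ m).integrable_norm_pow two_ne_zero
  have hA : Integrable (fun p : E × E => g p.1 p.2 * inner ℝ (p.1 - m) (p.2 - m)) (μ.prod μ) :=
    integrable_weight_mul ((memLp_prod_fst_sub hμ m).integrable_inner (memLp_prod_snd_sub hμ m))
      hg hg_nonneg hg_add_swap
  have hB : Integrable (fun p : E × E => g p.1 p.2 * ‖p.1 - m‖ ^ 2) (μ.prod μ) :=
    integrable_weight_mul hsq hg hg_nonneg hg_add_swap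
  have hsplit : (fun p : E × E => g p.1 p.2 * inner ℝ (p.1 - m) (p.2 - p.1)) =
      fun p => g p.1 p.2 * inner ℝ (p.1 - m) (p.2 - m) - g p.1 p.2 * ‖p.1 - m‖ ^ 2 := by
    funext p
    rw [show p.2 - p.1 = (p.2 - m) - (p.1 - m) by abel, inner_sub_right,
      real_inner_self_eq_norm_sq, mul_sub]
  have hint : Integrable (fun p : E × E => g p.1 p.2 * inner ℝ (p.1 - m) (p.2 - p.1)) (μ.prod μ) :=
    hsplit ▸ hA.sub hB
  have hlower : c * ∫ w, ‖w - m‖ ^ 2 ∂μ ≤ ∫ p, g p.1 p.2 * ‖p.1 - m‖ ^ 2 ∂(μ.prod μ) := by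
    have h := integral_mono (hsq.const_mul c) hB fun p =>
      mul_le_mul_of_nonneg_right (hc p.1 p.2) (sq_nonneg ‖p.1 - m‖)
    rwa [integral_const_mul, integral_fun_fst (fun w => ‖w - m‖ ^ 2), probReal_univ,
      one_smul] at h
  rw [integral_integral hint, hsplit, integral_sub hA hB,
    integral_weight_mul_inner_sub_integral_eq_zero hμ hg hg_nonneg hg_add_swap]
  linarith

end SymmetricWeight

lemma one_div_le_two_div_one_add {C : ℝ} (hC : 1 ≤ C) : 1 / C ≤ 2 / (1 + C) := by
  rw [div_le_div_iff₀ (by linarith) (by linarith)]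
  linarith

lemma alignment_diffusion_bound {lam sig kap C S Q X : ℝ} (hlam : 0 ≤ lam) (hkap : 0 ≤ kap)
    (hC : 1 ≤ C) (hS : 0 ≤ S) (hQ : Q ≤ S) (hX : X ≤ -(1 / (1 + C)) * S) :
    lam ^ 2 / 2 * Q + lam * X + sig ^ 2 * kap / 2 * Q ≤
      -(lam / C - lam ^ 2 - 2 * sig ^ 2 * kap) * (1 / 2 * S) := by
  have hrate := mul_le_mul_of_nonneg_left (one_div_le_two_div_one_add hC) (mul_nonneg hlam hS)
  have hsq := mul_le_mul_of_nonneg_left hQ (by positivity : 0 ≤ lam ^ 2 / 2)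
  have hnoise := mul_le_mul_of_nonneg_left hQ (by positivity : 0 ≤ sig ^ 2 * kap / 2)
  have hcross := mul_le_mul_of_nonneg_left hX hlam
  have hnoise_nonneg := mul_nonneg (mul_nonneg (sq_nonneg sig) hkap) hS
  linear_combination hsq + hnoise + hcross + (1 / 2 : ℝ) * hrate + (1 / 2 : ℝ) * hnoise_nonneg

lemma neg_dissipation_rate_mul_neg {lam sig kap C V : ℝ} (hkap : 0 ≤ kap)
    (hsig : sig ^ 2 < lam / (2 * kap) * (1 / C - lam)) (hV : 0 < V) :
    -(lam / C - lam ^ 2 - 2 * sig ^ 2 * kap) * V < 0 := by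
  rcases hkap.eq_or_lt with rfl | hkap
  · simp only [mul_zero, div_zero, zero_mul] at hsig
    exact absurd hsig (not_lt.2 (sq_nonneg sig))
  · have hrate : 2 * sig ^ 2 * kap < lam / C - lam ^ 2 := by
      have h := mul_lt_mul_of_pos_right hsig (by positivity : 0 < 2 * kap)
      rw [div_mul_eq_mul_div, div_mul_cancel₀ _ (by positivity)] at h
      field_simp at h ⊢
      linarith
    nlinarith

theorem core_inequality_microscopic_general {d : ℕ}
    (μ : Measure (EuclideanSpace ℝ (Fin d))) [IsProbabilityMeasure μ]
    (𝓔 : EuclideanSpace ℝ (Fin d) → ℝ) (h𝓔 : Measurable 𝓔)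
    (hbA : BddAbove (Set.range 𝓔)) (hbB : BddBelow (Set.range 𝓔))
    (hmom : Integrable (fun v => ‖v‖ ^ 2) μ)
    (β : ℝ) (hβ : 0 < β)
    (lam sig kap : ℝ) (hlam : 0 ≤ lam) (hkap : 0 ≤ kap) :
    let γ : EuclideanSpace ℝ (Fin d) → EuclideanSpace ℝ (Fin d) → ℝ :=
      fun x y => Real.exp (-β * 𝓔 y) / (Real.exp (-β * 𝓔 x) + Real.exp (-β * 𝓔 y))
    let m := ∫ v, v ∂μ
    let V := (1 / 2 : ℝ) * ∫ v, ‖v - m‖ ^ 2 ∂μ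
    let C := Real.exp (β * (sSup (Set.range 𝓔) - sInf (Set.range 𝓔)))
    (lam ^ 2 / 2) * (∫ v, ∫ w, (γ v w) ^ 2 * ‖w - v‖ ^ 2 ∂μ ∂μ) +
      lam * (∫ v, ∫ w, γ v w * (inner ℝ (v - m) (w - v) : ℝ) ∂μ ∂μ) +
      (sig ^ 2 * kap / 2) * (∫ v, ∫ w, (γ v w) ^ 2 * ‖v - w‖ ^ 2 ∂μ ∂μ) ≤
      -(lam / C - lam ^ 2 - 2 * sig ^ 2 * kap) * V ∧
    (sig ^ 2 < lam / (2 * kap) * (1 / C - lam) → 0 < V →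
      -(lam / C - lam ^ 2 - 2 * sig ^ 2 * kap) * V < 0) := by
  intro γ m V C
  have hμ : MemLp id 2 μ :=
    (memLp_two_iff_integrable_sq_norm measurable_id.aestronglyMeasurable).2 hmom
  have hγ : AEStronglyMeasurable (Function.uncurry γ) (μ.prod μ) :=
    (measurable_pairWeight h𝓔).aestronglyMeasurable
  have hspread : ∀ v w, 𝓔 w - 𝓔 v ≤ sSup (Set.range 𝓔) - sInf (Set.range 𝓔) := fun v w =>
    sub_le_sub (le_csSup hbA (Set.mem_range_self w)) (csInf_le hbB (Set.mem_range_self v))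
  have hC : 1 ≤ C := one_le_exp (mul_nonneg hβ.le (by linarith [hspread 0 0]))
  have hQ := integral_weight_sq_mul_norm_sub_sq_le hμ hγ pairWeight_nonneg pairWeight_add_swap
  have hX := integral_weight_mul_inner_le hμ hγ pairWeight_nonneg pairWeight_add_swap
    fun v w => one_div_one_add_exp_le_pairWeight hβ.le (hspread v w)
  simp only [norm_sub_rev _ (_ : EuclideanSpace ℝ (Fin d))] at hQ ⊢
  exact ⟨alignment_diffusion_bound hlam hkap hC (integral_nonneg fun v => by positivity) hQ hX,
    neg_dissipation_rate_mul_neg hkap⟩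

/-- Core inequality of Proposition 2.1 (microscopic best estimate only): the sum of the
quadratic alignment term, the cross alignment term and the diffusion term is bounded by
`-(λ/C_{β,𝓔} - λ² - 2σ²κ) V`; moreover under the parameter condition
`σ² < (λ/(2κ))(1/C_{β,𝓔} - λ)` this bound is strictly negative whenever `V > 0`. -/
theorem core_inequality_microscopic {d : ℕ} (hd : 1 ≤ d)
    (μ : Measure (EuclideanSpace ℝ (Fin d))) [IsProbabilityMeasure μ]
    (𝓔 : EuclideanSpace ℝ (Fin d) → ℝ) (h𝓔 : Measurable 𝓔)
    (hbA : BddAbove (Set.range 𝓔)) (hbB : BddBelow (Set.range 𝓔))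
    (hmom : Integrable (fun v => ‖v‖ ^ 2) μ)
    (β : ℝ) (hβ : 0 < β)
    (hlarge : Real.exp (-β * (sSup (Set.range 𝓔) - sInf (Set.range 𝓔))) ≤
      Real.sqrt 2 - 1)
    (lam sig kap : ℝ) (hlam : 0 ≤ lam) (hsig : 0 ≤ sig) (hkap : 0 ≤ kap) :
    let γ : EuclideanSpace ℝ (Fin d) → EuclideanSpace ℝ (Fin d) → ℝ :=
      fun x y => Real.exp (-β * 𝓔 y) / (Real.exp (-β * 𝓔 x) + Real.exp (-β * 𝓔 y))
    let m := ∫ v, v ∂μ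
    let V := (1 / 2 : ℝ) * ∫ v, ‖v - m‖ ^ 2 ∂μ
    let C := Real.exp (β * (sSup (Set.range 𝓔) - sInf (Set.range 𝓔)))
    (lam ^ 2 / 2) * (∫ v, ∫ w, (γ v w) ^ 2 * ‖w - v‖ ^ 2 ∂μ ∂μ) +
      lam * (∫ v, ∫ w, γ v w * (inner ℝ (v - m) (w - v) : ℝ) ∂μ ∂μ) +
      (sig ^ 2 * kap / 2) * (∫ v, ∫ w, (γ v w) ^ 2 * ‖v - w‖ ^ 2 ∂μ ∂μ) ≤
      -(lam / C - lam ^ 2 - 2 * sig ^ 2 * kap) * V ∧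
    (sig ^ 2 < lam / (2 * kap) * (1 / C - lam) → 0 < V →
      -(lam / C - lam ^ 2 - 2 * sig ^ 2 * kap) * V < 0) :=
  core_inequality_microscopic_general μ 𝓔 h𝓔 hbA hbB hmom β hβ lam sig kap hlam hkap
end

section
/- Core inequality of Proposition 3.2 (macroscopic best estimate only): for every α > 0 and λ, σ, κ ≥ 0, (λ²/2) ∫ ‖v_{α,𝓔}(μ) − v‖² dμ(v) + λ ∫ ⟨v − m, v_{α,𝓔}(μ) − v⟩ dμ(v) + (σ²κ/2) ∫ ‖v_{α,𝓔}(μ) − v‖² dμ(v) ≤ −( 2λ − λ² C_{α,𝓔} − σ²κ C_{α,𝓔} ) V, where C_{α,𝓔} := exp(α(𝓔̄ − 𝓔̲)). Consequently, if σ² < (λ/κ)(2/C_{α,𝓔} − λ), the right-hand side is strictly negative whenever V > 0. -/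
/-!
Write `ω = exp(-α𝓔)`, so that `e^{-α𝓔̄} ≤ ω ≤ e^{-α𝓔̲}`. Since `∫ (v - m) dμ = 0`, the cross
term equals `-2V`. For the other two terms, the weighted mean `v_α` minimises
`a ↦ ∫ ω ‖a - v‖² dμ`, so comparing `ω` with its bounds on both sides gives
`∫ ‖v_α - v‖² dμ ≤ C_{α,𝓔} ∫ ‖v - m‖² dμ = 2 C_{α,𝓔} V`. The rest is arithmetic.
-/

open MeasureTheory

section WeightedMean

variable {E : Type*} [NormedAddCommGroup E] [InnerProductSpace ℝ E] [CompleteSpace E]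
  [MeasurableSpace E] {μ : Measure E} {w : E → ℝ}

noncomputable def weightedMean (μ : Measure E) (w : E → ℝ) : E :=
  (∫ v, w v ∂μ)⁻¹ • ∫ v, w v • v ∂μ

theorem integral_smul_weightedMean_sub (hw : Integrable w μ)
    (hwv : Integrable (fun v => w v • v) μ) (h0 : ∫ v, w v ∂μ ≠ 0) :
    ∫ v, w v • (weightedMean μ w - v) ∂μ = 0 := by
  simp_rw [smul_sub]
  rw [integral_sub (hw.smul_const _) hwv, integral_smul_const, weightedMean,
    smul_inv_smul₀ h0, sub_self]

theorem integral_mul_norm_sub_sq_eq (a b : E) (hw : Integrable w μ)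
    (hwv : Integrable (fun v => w v • v) μ)
    (hwb : Integrable (fun v => w v * ‖b - v‖ ^ 2) μ) :
    ∫ v, w v * ‖a - v‖ ^ 2 ∂μ = ∫ v, w v * ‖b - v‖ ^ 2 ∂μ + (∫ v, w v ∂μ) * ‖a - b‖ ^ 2
      + 2 * inner ℝ (a - b) (∫ v, w v • (b - v) ∂μ) := by
  have hwbv : Integrable (fun v => w v • (b - v)) μ := by
    simp_rw [smul_sub]
    exact (hw.smul_const b).sub hwv
  have hpoint : ∀ v, w v * ‖a - v‖ ^ 2 =
      w v * ‖b - v‖ ^ 2 + w v * ‖a - b‖ ^ 2 + 2 * inner ℝ (a - b) (w v • (b - v)) := by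
    intro v
    rw [show a - v = (a - b) + (b - v) by abel, norm_add_sq_real, real_inner_smul_right]
    ring
  simp_rw [hpoint]
  have hsum : Integrable (fun v => w v * ‖b - v‖ ^ 2 + w v * ‖a - b‖ ^ 2) μ :=
    hwb.add (hw.mul_const _)
  rw [integral_add hsum ((hwbv.const_inner _).const_mul 2),
    integral_add hwb (hw.mul_const _), integral_mul_const, integral_const_mul,
    integral_inner hwbv]

theorem integral_mul_norm_weightedMean_sub_sq_le (a : E) (hw : Integrable w μ)
    (hwv : Integrable (fun v => w v • v) μ)
    (hwb : Integrable (fun v => w v * ‖weightedMean μ w - v‖ ^ 2) μ)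
    (hpos : 0 < ∫ v, w v ∂μ) :
    ∫ v, w v * ‖weightedMean μ w - v‖ ^ 2 ∂μ ≤ ∫ v, w v * ‖a - v‖ ^ 2 ∂μ := by
  rw [integral_mul_norm_sub_sq_eq a _ hw hwv hwb,
    integral_smul_weightedMean_sub hw hwv hpos.ne', inner_zero_right]
  nlinarith [mul_nonneg hpos.le (sq_nonneg ‖a - weightedMean μ w‖)]

theorem integral_norm_weightedMean_sub_sq_le [IsFiniteMeasure μ] [NeZero μ] {L M : ℝ}
    (hw : AEStronglyMeasurable w μ) (hL : 0 < L) (hLw : ∀ v, L ≤ w v) (hwM : ∀ v, w v ≤ M)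
    (hX : MemLp (fun v : E => v) 2 μ) (a : E) :
    ∫ v, ‖weightedMean μ w - v‖ ^ 2 ∂μ ≤ M / L * ∫ v, ‖v - a‖ ^ 2 ∂μ := by
  have hw_bdd : ∀ᵐ v ∂μ, ‖w v‖ ≤ M := ae_of_all _ fun v => by
    rw [Real.norm_of_nonneg (hL.le.trans (hLw v))]
    exact hwM v
  have hw_int : Integrable w μ := .of_bound hw M hw_bdd
  have hwv : Integrable (fun v => w v • v) μ := (hX.integrable one_le_two).bdd_smul M hw hw_bdd
  have hsq (c : E) : Integrable (fun v => ‖c - v‖ ^ 2) μ :=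
    have hc : MemLp (fun v => c - v) 2 μ := (memLp_const c).sub hX
    (memLp_two_iff_integrable_sq_norm hc.1).1 hc
  have hwsq (c : E) : Integrable (fun v => w v * ‖c - v‖ ^ 2) μ := (hsq c).bdd_mul hw hw_bdd
  have hpos : 0 < ∫ v, w v ∂μ := by
    have := integral_mono (integrable_const L) hw_int hLw
    simp only [integral_const, smul_eq_mul] at this
    exact lt_of_lt_of_le (mul_pos measureReal_univ_pos hL) this
  rw [div_mul_eq_mul_div, le_div_iff₀ hL, mul_comm]
  calc L * ∫ v, ‖weightedMean μ w - v‖ ^ 2 ∂μ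
      = ∫ v, L * ‖weightedMean μ w - v‖ ^ 2 ∂μ := (integral_const_mul _ _).symm
    _ ≤ ∫ v, w v * ‖weightedMean μ w - v‖ ^ 2 ∂μ :=
        integral_mono ((hsq _).const_mul L) (hwsq _)
          fun v => mul_le_mul_of_nonneg_right (hLw v) (sq_nonneg _)
    _ ≤ ∫ v, w v * ‖a - v‖ ^ 2 ∂μ :=
        integral_mul_norm_weightedMean_sub_sq_le a hw_int hwv (hwsq _) hpos
    _ ≤ ∫ v, M * ‖a - v‖ ^ 2 ∂μ :=
        integral_mono (hwsq a) ((hsq a).const_mul M)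
          fun v => mul_le_mul_of_nonneg_right (hwM v) (sq_nonneg _)
    _ = M * ∫ v, ‖v - a‖ ^ 2 ∂μ := by
        simp_rw [integral_const_mul, norm_sub_rev a]

end WeightedMean

theorem integral_inner_sub_integral_sub {E : Type*} [NormedAddCommGroup E]
    [InnerProductSpace ℝ E] [CompleteSpace E] [MeasurableSpace E] {μ : Measure E}
    [IsProbabilityMeasure μ] (hX : MemLp (fun v : E => v) 2 μ) (a : E) :
    ∫ v, inner ℝ (v - ∫ u, u ∂μ) (a - v) ∂μ = -∫ v, ‖v - ∫ u, u ∂μ‖ ^ 2 ∂μ := by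
  set m := ∫ u, u ∂μ
  have hX1 : Integrable (fun v : E => v) μ := hX.integrable one_le_two
  have hcent : Integrable (fun v => v - m) μ := hX1.sub (integrable_const m)
  have hcent_sq : Integrable (fun v => ‖v - m‖ ^ 2) μ :=
    (memLp_two_iff_integrable_sq_norm hcent.1).1 (hX.sub (memLp_const m))
  have hmean : ∫ v, (v - m) ∂μ = 0 := by
    rw [integral_sub hX1 (integrable_const m), integral_const, probReal_univ, one_smul, sub_self]
  have hpoint : ∀ v, inner ℝ (v - m) (a - v) = inner ℝ (a - m) (v - m) - ‖v - m‖ ^ 2 := by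
    intro v
    rw [show a - v = (a - m) - (v - m) by abel, inner_sub_right, real_inner_comm,
      real_inner_self_eq_norm_sq]
  simp_rw [hpoint]
  rw [integral_sub (hcent.const_inner _) hcent_sq, integral_inner hcent, hmean,
    inner_zero_right, zero_sub]

theorem decay_rate_pos_of_sq_lt {lam sig kap C : ℝ} (hkap : 0 ≤ kap) (hC : 0 < C)
    (h : sig ^ 2 < lam / kap * (2 / C - lam)) :
    0 < 2 * lam - lam ^ 2 * C - sig ^ 2 * kap * C := by
  rcases hkap.eq_or_lt with rfl | hkap
  · -- `lam / 0 = 0`, so the hypothesis reads `sig ^ 2 < 0`.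
    rw [div_zero, zero_mul] at h
    exact absurd h (not_lt.2 (sq_nonneg sig))
  · have h' : sig ^ 2 * kap < lam * (2 / C - lam) := by
      rwa [div_mul_eq_mul_div, lt_div_iff₀ hkap] at h
    have key := mul_lt_mul_of_pos_right h' hC
    rw [show lam * (2 / C - lam) * C = 2 * lam - lam ^ 2 * C by field_simp] at key
    linarith

theorem core_inequality_macroscopic_general {d : ℕ}
    (μ : Measure (EuclideanSpace ℝ (Fin d))) [IsProbabilityMeasure μ]
    (𝓔 : EuclideanSpace ℝ (Fin d) → ℝ) (h𝓔 : Measurable 𝓔)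
    (hbA : BddAbove (Set.range 𝓔)) (hbB : BddBelow (Set.range 𝓔))
    (hmom : Integrable (fun v => ‖v‖ ^ 2) μ)
    (α : ℝ) (hα : 0 < α)
    (lam sig kap : ℝ) (hkap : 0 ≤ kap) :
    let m := ∫ v, v ∂μ
    let vα := (∫ v, Real.exp (-α * 𝓔 v) ∂μ)⁻¹ • ∫ v, Real.exp (-α * 𝓔 v) • v ∂μ
    let V := (1 / 2 : ℝ) * ∫ v, ‖v - m‖ ^ 2 ∂μ
    let C := Real.exp (α * (sSup (Set.range 𝓔) - sInf (Set.range 𝓔)))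
    (lam ^ 2 / 2) * (∫ v, ‖vα - v‖ ^ 2 ∂μ) +
      lam * (∫ v, (inner ℝ (v - m) (vα - v) : ℝ) ∂μ) +
      (sig ^ 2 * kap / 2) * (∫ v, ‖vα - v‖ ^ 2 ∂μ) ≤
      -(2 * lam - lam ^ 2 * C - sig ^ 2 * kap * C) * V ∧
    (sig ^ 2 < lam / kap * (2 / C - lam) → 0 < V →
      -(2 * lam - lam ^ 2 * C - sig ^ 2 * kap * C) * V < 0) := by
  intro m vα V C
  have hX : MemLp (fun v => v) 2 μ := (memLp_two_iff_integrable_sq_norm (by fun_prop)).2 hmom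
  have hlow (v) : Real.exp (-α * sSup (Set.range 𝓔)) ≤ Real.exp (-α * 𝓔 v) :=
    Real.exp_le_exp.2 (by nlinarith [le_csSup hbA ⟨v, rfl⟩])
  have hupp (v) : Real.exp (-α * 𝓔 v) ≤ Real.exp (-α * sInf (Set.range 𝓔)) :=
    Real.exp_le_exp.2 (by nlinarith [csInf_le hbB ⟨v, rfl⟩])
  have hC : C = Real.exp (-α * sInf (Set.range 𝓔)) / Real.exp (-α * sSup (Set.range 𝓔)) := by
    rw [← Real.exp_sub]
    exact congrArg Real.exp (by ring)
  have hquad : ∫ v, ‖vα - v‖ ^ 2 ∂μ ≤ C * (2 * V) := by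
    have := integral_norm_weightedMean_sub_sq_le (by fun_prop) (Real.exp_pos _) hlow hupp hX m
    calc ∫ v, ‖vα - v‖ ^ 2 ∂μ ≤ _ := this
      _ = C * (2 * V) := by rw [hC]; ring
  have hcross : ∫ v, inner ℝ (v - m) (vα - v) ∂μ = -(2 * V) := by
    rw [integral_inner_sub_integral_sub hX]
    ring
  refine ⟨?_, fun hσ hV => mul_neg_of_neg_of_pos
    (neg_neg_of_pos (decay_rate_pos_of_sq_lt hkap (Real.exp_pos _) hσ)) hV⟩
  rw [hcross]
  nlinarith [mul_le_mul_of_nonneg_left hquad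
    (by positivity : (0 : ℝ) ≤ lam ^ 2 / 2 + sig ^ 2 * kap / 2)]

/-- Core inequality of Proposition 3.2 (macroscopic best estimate only): the sum of the
quadratic term, the cross term and the diffusion term is bounded by
`-(2λ - λ² C_{α,𝓔} - σ²κ C_{α,𝓔}) V`; moreover under `σ² < (λ/κ)(2/C_{α,𝓔} - λ)` this
bound is strictly negative whenever `V > 0`. -/
theorem core_inequality_macroscopic {d : ℕ} (hd : 1 ≤ d)
    (μ : Measure (EuclideanSpace ℝ (Fin d))) [IsProbabilityMeasure μ]
    (𝓔 : EuclideanSpace ℝ (Fin d) → ℝ) (h𝓔 : Measurable 𝓔)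
    (hbA : BddAbove (Set.range 𝓔)) (hbB : BddBelow (Set.range 𝓔))
    (hmom : Integrable (fun v => ‖v‖ ^ 2) μ)
    (α : ℝ) (hα : 0 < α)
    (lam sig kap : ℝ) (hlam : 0 ≤ lam) (hsig : 0 ≤ sig) (hkap : 0 ≤ kap) :
    let m := ∫ v, v ∂μ
    let vα := (∫ v, Real.exp (-α * 𝓔 v) ∂μ)⁻¹ • ∫ v, Real.exp (-α * 𝓔 v) • v ∂μ
    let V := (1 / 2 : ℝ) * ∫ v, ‖v - m‖ ^ 2 ∂μ
    let C := Real.exp (α * (sSup (Set.range 𝓔) - sInf (Set.range 𝓔)))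
    (lam ^ 2 / 2) * (∫ v, ‖vα - v‖ ^ 2 ∂μ) +
      lam * (∫ v, (inner ℝ (v - m) (vα - v) : ℝ) ∂μ) +
      (sig ^ 2 * kap / 2) * (∫ v, ‖vα - v‖ ^ 2 ∂μ) ≤
      -(2 * lam - lam ^ 2 * C - sig ^ 2 * kap * C) * V ∧
    (sig ^ 2 < lam / kap * (2 / C - lam) → 0 < V →
      -(2 * lam - lam ^ 2 * C - sig ^ 2 * kap * C) * V < 0) :=
  core_inequality_macroscopic_general μ 𝓔 h𝓔 hbA hbB hmom α hα lam sig kap hkap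
end
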